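/- Let (Q, f) be a triangulation quiver with at least three vertices, with weight function m satisfying the Assumption. If α is an arrow such that ᾱ is not a loop, n_ᾱ = 2 and n_α = 3, then the g-cycle of f(α) has length at least 5, i.e. n_{f(α)} ≥ 5. -/

import Mathlib

/-- A triangulation quiver: a connected 2-regular quiver `(Q₀ = V, Q₁ = A, s, t)`
with at least two vertices, together with a permutation `f` of the arrows with
`t α = s (f α)` and `f³ = id`.  Two-regularity is encoded via the involution
`bar` on arrows (`bar α` is the unique arrow `≠ α` with the same source);
the in-degree condition follows from `f` being a bijection. -/
structure TQ (V A : Type) [Fintype V] [DecidableEq V] [Fintype A] [DecidableEq A] where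
  s : A → V
  t : A → V
  bar : A → A
  bar_ne : ∀ a, bar a ≠ a
  bar_invol : ∀ a, bar (bar a) = a
  s_bar : ∀ a, s (bar a) = s a
  bar_complete : ∀ a b, s b = s a → b = a ∨ b = bar a
  s_surj : ∀ i, ∃ a, s a = i
  f : Equiv.Perm A
  t_eq : ∀ a, t a = s (f a)
  f_cube : ∀ a, f (f (f a)) = a
  connected : ∀ i j : V, Relation.ReflTransGen
      (fun p q => ∃ e, (s e = p ∧ t e = q) ∨ (s e = q ∧ t e = p)) i j
  two_vertices : 2 ≤ Fintype.card V

variable {V A : Type} [Fintype V] [DecidableEq V] [Fintype A] [DecidableEq A]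

/-- The permutation `g` of arrows, `g α = \overline{f α}`. -/
def TQ.g (Q : TQ V A) (a : A) : A := Q.bar (Q.f a)

/-- `n α` is the length of the `g`-cycle of `α`. -/
noncomputable def TQ.n (Q : TQ V A) (a : A) : ℕ := Function.minimalPeriod Q.g a

/-- A loop is an arrow with equal source and target. -/
def TQ.IsLoop (Q : TQ V A) (a : A) : Prop := Q.s a = Q.t a

/-- A weight function: positive integers `m α`, constant on `g`-cycles. -/
structure Weights (Q : TQ V A) where
  m : A → ℕ
  m_pos : ∀ a, 0 < m a
  m_g : ∀ a, m (Q.g a) = m a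

/-- An arrow `α` is virtual if `m α * n α = 2`. -/
def Weights.Virtual {Q : TQ V A} (W : Weights Q) (a : A) : Prop := W.m a * Q.n a = 2

/-- The Assumption: (1) `m α n α ≥ 2` for all `α`; (2) `m α n α ≥ 3` whenever `ᾱ` is
virtual and not a loop; (3) `m α n α ≥ 4` whenever `ᾱ` is virtual and a loop. -/
def Weights.Assumption {Q : TQ V A} (W : Weights Q) : Prop :=
  (∀ a, 2 ≤ W.m a * Q.n a) ∧
  (∀ a, W.Virtual (Q.bar a) → ¬ Q.IsLoop (Q.bar a) → 3 ≤ W.m a * Q.n a) ∧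
  (∀ a, W.Virtual (Q.bar a) → Q.IsLoop (Q.bar a) → 4 ≤ W.m a * Q.n a)

/-- The data of an associative unital `K`-algebra `Λ` generated by pairwise orthogonal
idempotents `e i` summing to `1`, elements `x α ∈ e (s α) * Λ * e (t α)`, and nonzero
parameters `c α ∈ K` constant on `g`-cycles. -/
structure AlgData (Q : TQ V A) (W : Weights Q) (K : Type) [Field K]
    (Λ : Type) [Ring Λ] [Algebra K Λ] where
  e : V → Λ
  x : A → Λ
  c : A → K
  c_ne : ∀ a, c a ≠ 0
  c_g : ∀ a, c (Q.g a) = c a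
  e_orth : ∀ i j, e i * e j = if i = j then e i else 0
  e_sum : ∑ i, e i = 1
  x_sandwich : ∀ a, e (Q.s a) * x a * e (Q.t a) = x a

variable {Q : TQ V A} {W : Weights Q} {K : Type} [Field K] {Λ : Type} [Ring Λ] [Algebra K Λ]

/-- `B α = x_α x_{g α} ⋯ x_{g^{m_α n_α − 1} α}`, the full product along the `g`-cycle. -/
noncomputable def AlgData.B (D : AlgData Q W K Λ) (a : A) : Λ :=
  ((List.range (W.m a * Q.n a)).map (fun k => D.x (Q.g^[k] a))).prod

/-- `A α = x_α x_{g α} ⋯ x_{g^{m_α n_α − 2} α}`, of length `m_α n_α − 1`. -/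
noncomputable def AlgData.Apath (D : AlgData Q W K Λ) (a : A) : Λ :=
  ((List.range (W.m a * Q.n a - 1)).map (fun k => D.x (Q.g^[k] a))).prod

/-- The defining relations (R1), (R2), (R3) of a weighted surface algebra. -/
def AlgData.Rels (D : AlgData Q W K Λ) : Prop :=
  (∀ a, D.x a * D.x (Q.f a) = D.c (Q.bar a) • D.Apath (Q.bar a)) ∧
  (∀ a, ¬ W.Virtual (Q.f (Q.f a)) →
      ¬ (W.Virtual (Q.f (Q.bar a)) ∧ W.m (Q.bar a) = 1 ∧ Q.n (Q.bar a) = 3) →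
      D.x a * D.x (Q.f a) * D.x (Q.g (Q.f a)) = 0) ∧
  (∀ a, ¬ W.Virtual (Q.f a) →
      ¬ (W.Virtual (Q.f (Q.f a)) ∧ W.m (Q.f a) = 1 ∧ Q.n (Q.f a) = 3) →
      D.x a * D.x (Q.g a) * D.x (Q.f (Q.g a)) = 0)

/-- `J`: the two-sided ideal of `Λ` generated by the `x α`, as a `K`-submodule. -/
def AlgData.J (D : AlgData Q W K Λ) : Submodule K Λ :=
  Submodule.span K {z | ∃ (a : A) (u v : Λ), z = u * D.x a * v}

/-!
Write `β = ᾱ`. Because `f³ = id` and `¯` is an involution, `g (f x) = f y ↔ f (g y) = x`; with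
`g² β = β` and `g³ α = α` this yields the start of the `g`-orbit of `f α`, namely
`f α ↦ f β ↦ f (g α)`. Closing that orbit after 1, 2, 3 or 4 steps would force, respectively,
`β = α`, `g α = α`, `g β = β`, or a fixed point of `¯`.
-/

namespace TQ

variable (Q : TQ V A)

theorem f_f_eq_iff {a b : A} : Q.f (Q.f a) = b ↔ Q.f b = a := by
  constructor
  · rintro rfl
    exact Q.f_cube a
  · rintro rfl
    exact Q.f_cube b

theorem bar_f (a : A) : Q.bar (Q.f a) = Q.g a :=
  rfl

theorem bar_g (a : A) : Q.bar (Q.g a) = Q.f a :=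
  Q.bar_invol _

theorem g_eq_iff {a b : A} : Q.g a = b ↔ Q.f a = Q.bar b :=
  Function.Involutive.eq_iff Q.bar_invol

theorem g_injective : Function.Injective Q.g :=
  (Function.Involutive.injective Q.bar_invol).comp Q.f.injective

theorem n_pos (a : A) : 0 < Q.n a :=
  Function.minimalPeriod_pos_of_mem_periodicPts (Q.g_injective.mem_periodicPts a)

theorem iterate_n (a : A) : Q.g^[Q.n a] a = a :=
  Function.iterate_minimalPeriod

theorem n_eq_one_of_g_eq {a : A} (h : Q.g a = a) : Q.n a = 1 :=
  Function.minimalPeriod_eq_one_iff_isFixedPt.mpr h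

theorem g_f_eq_f_iff {x y : A} : Q.g (Q.f x) = Q.f y ↔ Q.f (Q.g y) = x := by
  rw [g_eq_iff, bar_f, f_f_eq_iff]

theorem g_f_bar_eq_f_iterate_iff (a : A) (k : ℕ) :
    Q.g (Q.f (Q.bar a)) = Q.f (Q.g^[k] a) ↔ Q.g^[k + 2] a = a := by
  rw [g_f_eq_f_iff, ← g_eq_iff, ← Function.iterate_succ_apply' Q.g,
    ← Function.iterate_succ_apply' Q.g]

theorem g_f_eq_bar_iff (c : A) : Q.g (Q.f c) = Q.bar c ↔ Q.f c = c := by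
  rw [g_eq_iff, Q.bar_invol, f_f_eq_iff]

theorem g_eq_bar_of_g_f_eq_bar {c : A} (h : Q.g (Q.f c) = Q.bar c) : Q.g c = Q.bar c := by
  rw [← bar_f, (Q.g_f_eq_bar_iff c).1 h]

theorem g_g_f_ne_bar (c : A) : Q.g (Q.g (Q.f c)) ≠ Q.bar c := by
  rw [Ne, g_eq_iff, Q.bar_invol, ← g_f_eq_f_iff]
  exact Q.bar_ne _

end TQ

theorem stmt6_general (Q : TQ V A) (α : A)
    (h2 : Q.n (Q.bar α) = 2) (hn : Q.n α = 3) :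
    5 ≤ Q.n (Q.f α) := by
  have hβ : Q.g^[2] (Q.bar α) = Q.bar α := h2 ▸ Q.iterate_n _
  have hα : Q.g^[3] α = α := hn ▸ Q.iterate_n _
  have E1 : Q.g (Q.f α) = Q.f (Q.bar α) := by
    simpa only [Q.bar_invol, Function.iterate_zero_apply] using
      (Q.g_f_bar_eq_f_iterate_iff (Q.bar α) 0).2 hβ
  have E2 : Q.g (Q.f (Q.bar α)) = Q.f (Q.g α) := (Q.g_f_bar_eq_f_iterate_iff α 1).2 hα
  have hper := Q.iterate_n (Q.f α)
  by_contra! hlt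
  have hpos := Q.n_pos (Q.f α)
  interval_cases Q.n (Q.f α) <;>
    simp only [Function.iterate_succ_apply', Function.iterate_zero_apply, E1, E2] at hper
  · exact Q.bar_ne α (Q.f.injective hper)
  · have := Q.n_eq_one_of_g_eq (Q.f.injective hper)
    omega
  · rw [← Q.bar_g α] at hper
    have hgg : Q.g (Q.g α) = Q.f α := (Q.g_eq_bar_of_g_f_eq_bar hper).trans (Q.bar_g α)
    have hfix : Q.g (Q.bar α) = Q.bar α := by
      rw [Q.g_eq_iff, Q.bar_invol, ← E1, ← hgg]
      exact hα
    have := Q.n_eq_one_of_g_eq hfix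
    omega
  · rw [← Q.bar_g α] at hper
    exact Q.g_g_f_ne_bar _ hper

/-- if `ᾱ` is not a loop, `n ᾱ = 2` and `n α = 3`, then `n (f α) ≥ 5`. -/
theorem stmt6 (Q : TQ V A) (W : Weights Q) (h3 : 3 ≤ Fintype.card V)
    (hA : W.Assumption) (α : A)
    (hl : ¬ Q.IsLoop (Q.bar α)) (h2 : Q.n (Q.bar α) = 2) (hn : Q.n α = 3) :
    5 ≤ Q.n (Q.f α) :=
  stmt6_general Q α h2 hn
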